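/- Let n ≥ 1, let K be a symmetric positive definite n × n real matrix, let Y = diag(y) for y ∈ {-1,1}^n, let μ ∈ ℝ^n, let σ > 0, let C > 0, and let α ∈ ℝ^n with 0 ≤ α_i < C for all i. Define the joint partition function Z(α) = [∫_{ℝ^n} φ_{μ,K}(ω) exp(α^T Y ω) dω] · [∫_ℝ (2πσ²)^{-1/2} e^{-b²/(2σ²)} exp(b · y^T α) db] · ∏_{i=1}^n [∫_{-∞}^1 C e^{-C(1-γ_i)} e^{-α_i γ_i} dγ_i]. Then -log Z(α) = -α^T Y μ - (1/2) α^T Y K Y α - (1/2) σ² (y^T α)² + Σ_{i=1}^n ( α_i + log(1 - α_i/C) ). (This is the dual objective of Corollary 3: with μ = Σ_{t<τ} k(X_{(τ)}, X_{(t)}) Y_{(t)} α̂_{(t)} and K = K_{(τ)}, maximizing -log Z(α) over α ≥ 0 subject to y^T α = 0 gives the optimal Lagrange multipliers α̂_{(τ)}, with the term α^T(1 - Yμ) weighting current multipliers by the prior prediction errors.) -/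

import Mathlib

open MeasureTheory Real Matrix

/-- The density of the Gaussian `N(μ, S)` on `ℝ^n`:
`φ_{μ,S}(x) = det (2π S)^{-1/2} exp (-(1/2) (x-μ)ᵀ S⁻¹ (x-μ))`. -/
noncomputable def gaussDensity {n : ℕ} (μ : Fin n → ℝ)
    (S : Matrix (Fin n) (Fin n) ℝ) (x : Fin n → ℝ) : ℝ :=
  (((2 * π) • S).det) ^ (-(1 : ℝ) / 2) *
    Real.exp (-(1 / 2) * ((x - μ) ⬝ᵥ S⁻¹ *ᵥ (x - μ)))

/-!
Each factor of `Z(α)` is an explicit Gaussian or exponential integral. For the weight factor write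
`K = B * B` with `B` the symmetric square root of `K`: the substitution `ω = μ + B u` turns
`∫ φ_{μ,K}(ω) exp(cᵀω) dω` into `exp(cᵀμ)` times a product of one-dimensional integrals
`∫ exp(-t²/2 + d t) dt = √(2π) exp(d²/2)` with `d = B c`, and the Jacobian `|det B|` together with
the factors `√(2π)` cancels the normalisation `det(2πK)^{-1/2}`. The bias factor is the same
one-dimensional computation, and the `i`-th slack factor equals `C e^{-αᵢ} / (C - αᵢ)`.
So `Z(α)` is the exponential of minus the dual objective, with `c = Yα`.
-/

theorem integral_exp_neg_mul_sq_add_mul {a : ℝ} (ha : 0 < a) (c : ℝ) :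
    ∫ x : ℝ, exp (-a * x ^ 2 + c * x) = √(π / a) * exp (c ^ 2 / (4 * a)) := by
  have h := integral_cexp_quadratic (b := -a) (by simpa using ha) c 0
  have hsqrt : ((π : ℂ) / -(-a : ℂ)) ^ (1 / 2 : ℂ) = (√(π / a) : ℂ) := by
    rw [neg_neg, ← Complex.ofReal_div, sqrt_eq_rpow, Complex.ofReal_cpow (by positivity)]
    norm_num
  have hexp : (0 : ℂ) - c ^ 2 / (4 * (-a : ℂ)) = c ^ 2 / (4 * a) := by ring
  rw [hsqrt, hexp] at h
  have h' : ∫ x : ℝ, ((exp (-a * x ^ 2 + c * x) : ℝ) : ℂ) =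
      ((√(π / a) * exp (c ^ 2 / (4 * a)) : ℝ) : ℂ) := by
    push_cast
    simpa only [add_zero] using h
  exact Complex.ofReal_injective (integral_ofReal.symm.trans h')

theorem integral_centered_gaussian_mul_exp {σ : ℝ} (hσ : 0 < σ) (s : ℝ) :
    ∫ b : ℝ, (2 * π * σ ^ 2) ^ (-(1 : ℝ) / 2) * exp (-b ^ 2 / (2 * σ ^ 2)) * exp (b * s) =
      exp (1 / 2 * σ ^ 2 * s ^ 2) := by
  have ha : 0 < (2 * σ ^ 2)⁻¹ := by positivity
  have hexp : ∀ b : ℝ,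
      (2 * π * σ ^ 2) ^ (-(1 : ℝ) / 2) * exp (-b ^ 2 / (2 * σ ^ 2)) * exp (b * s) =
        (2 * π * σ ^ 2) ^ (-(1 : ℝ) / 2) * exp (-(2 * σ ^ 2)⁻¹ * b ^ 2 + s * b) := fun b => by
    rw [mul_assoc, ← exp_add]; ring_nf
  have hconst : (2 * π * σ ^ 2) ^ (-(1 : ℝ) / 2) * √(π / (2 * σ ^ 2)⁻¹) = 1 := by
    rw [div_inv_eq_mul, neg_div, rpow_neg (by positivity), ← sqrt_eq_rpow,
      show π * (2 * σ ^ 2) = 2 * π * σ ^ 2 by ring]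
    exact inv_mul_cancel₀ (by positivity)
  simp_rw [hexp]
  rw [integral_const_mul, integral_exp_neg_mul_sq_add_mul ha, ← mul_assoc, hconst, one_mul]
  congr 1
  field_simp
  ring

theorem integral_slack_prior_mul_exp {C a : ℝ} (hC : 0 < C) (haC : a < C) :
    ∫ γ in Set.Iic (1 : ℝ), C * exp (-C * (1 - γ)) * exp (-a * γ) =
      exp (-(a + log (1 - a / C))) := by
  have hCa : 0 < C - a := by linarith
  have hexp : ∀ γ : ℝ, C * exp (-C * (1 - γ)) * exp (-a * γ) =
      C * exp (-C) * exp ((C - a) * γ) := fun γ => by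
    rw [mul_assoc, ← exp_add, mul_assoc, ← exp_add]; ring_nf
  simp_rw [hexp]
  have hpos : 0 < 1 - a / C := by rw [sub_pos, div_lt_one hC]; exact haC
  rw [integral_const_mul, integral_exp_mul_Iic hCa, neg_add, exp_add, exp_neg (log _),
    exp_log hpos, mul_one, exp_sub, exp_neg, exp_neg]
  field_simp

theorem integral_comp_mulVec {ι E : Type*} [Fintype ι] [DecidableEq ι]
    [NormedAddCommGroup E] [NormedSpace ℝ E] {B : Matrix ι ι ℝ} (hB : B.det ≠ 0)
    (f : (ι → ℝ) → E) :
    ∫ u, f (B *ᵥ u) = |B.det|⁻¹ • ∫ x, f x := by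
  have hdet : LinearMap.det (toLin' B) ≠ 0 := by rwa [LinearMap.det_toLin']
  have hemb : MeasurableEmbedding (toLin' B) :=
    ((toLin' B).equivOfDetNeZero hdet).toContinuousLinearEquiv.toHomeomorph.measurableEmbedding
  calc ∫ u, f (B *ᵥ u) = ∫ x, f x ∂(Measure.map (toLin' B) volume) :=
        (hemb.integral_map f).symm
    _ = |B.det|⁻¹ • ∫ x, f x := by
        rw [Real.map_linearMap_volume_pi_eq_smul_volume_pi hdet, integral_smul_measure,
          ENNReal.toReal_ofReal (abs_nonneg _), LinearMap.det_toLin', abs_inv]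

theorem integral_exp_neg_half_dotProduct_self_add {ι : Type*} [Fintype ι] (d : ι → ℝ) :
    ∫ u : ι → ℝ, exp (-(1 / 2) * (u ⬝ᵥ u) + d ⬝ᵥ u) =
      √(2 * π) ^ Fintype.card ι * exp (d ⬝ᵥ d / 2) := by
  have hprod : ∀ u : ι → ℝ, exp (-(1 / 2) * (u ⬝ᵥ u) + d ⬝ᵥ u) =
      ∏ i, exp (-(1 / 2) * u i ^ 2 + d i * u i) := fun u => by
    simp only [← exp_sum, dotProduct, Finset.mul_sum, ← Finset.sum_add_distrib, sq]
  have hfactor : ∀ i, ∫ t : ℝ, exp (-(1 / 2) * t ^ 2 + d i * t) =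
      √(2 * π) * exp (d i ^ 2 / 2) := fun i => by
    rw [integral_exp_neg_mul_sq_add_mul (by norm_num)]
    norm_num [div_div_eq_mul_div, mul_comm]
  simp_rw [hprod]
  rw [integral_fintype_prod_volume_eq_prod (fun i t => exp (-(1 / 2) * t ^ 2 + d i * t))]
  simp_rw [hfactor]
  rw [Finset.prod_mul_distrib, Finset.prod_const, ← exp_sum, Finset.card_univ]
  simp only [dotProduct, Finset.sum_div, sq]

theorem Matrix.IsSymm.mulVec_dotProduct {ι : Type*} [Fintype ι] {B : Matrix ι ι ℝ}
    (hB : B.IsSymm) (u w : ι → ℝ) : (B *ᵥ u) ⬝ᵥ w = u ⬝ᵥ (B *ᵥ w) := by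
  rw [← vecMul_transpose, hB.eq, dotProduct_mulVec]

theorem integral_exp_neg_half_inv_mul_self_add {ι : Type*} [Fintype ι] [DecidableEq ι]
    {B : Matrix ι ι ℝ} (hBs : B.IsSymm) (hB : B.det ≠ 0) (c : ι → ℝ) :
    ∫ x : ι → ℝ, exp (-(1 / 2) * (x ⬝ᵥ (B * B)⁻¹ *ᵥ x) + c ⬝ᵥ x) =
      |B.det| * √(2 * π) ^ Fintype.card ι * exp (c ⬝ᵥ (B * B) *ᵥ c / 2) := by
  have hunit : IsUnit B.det := hB.isUnit
  have hwhiten : ∀ u : ι → ℝ, (B *ᵥ u) ⬝ᵥ (B * B)⁻¹ *ᵥ (B *ᵥ u) = u ⬝ᵥ u := fun u => by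
    rw [hBs.mulVec_dotProduct, mulVec_mulVec, mulVec_mulVec, Matrix.mul_inv_rev,
      mul_assoc, mul_assoc, nonsing_inv_mul B hunit, mul_one, mul_nonsing_inv B hunit,
      one_mulVec]
  have hlin : ∀ u : ι → ℝ, c ⬝ᵥ (B *ᵥ u) = (B *ᵥ c) ⬝ᵥ u := fun u =>
    (hBs.mulVec_dotProduct c u).symm
  have hcov : ∫ x : ι → ℝ, exp (-(1 / 2) * (x ⬝ᵥ (B * B)⁻¹ *ᵥ x) + c ⬝ᵥ x) =
      |B.det| * ∫ u : ι → ℝ, exp (-(1 / 2) * (u ⬝ᵥ u) + (B *ᵥ c) ⬝ᵥ u) := by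
    simp_rw [← hwhiten, ← hlin]
    rw [integral_comp_mulVec hB fun x => exp (-(1 / 2) * (x ⬝ᵥ (B * B)⁻¹ *ᵥ x) + c ⬝ᵥ x),
      smul_eq_mul, mul_inv_cancel_left₀ (abs_ne_zero.mpr hB)]
  rw [hcov, mul_assoc, integral_exp_neg_half_dotProduct_self_add, hBs.mulVec_dotProduct,
    mulVec_mulVec]

open scoped MatrixOrder in
theorem Matrix.PosDef.exists_isSymm_mul_self_eq {ι : Type*} [Fintype ι] [DecidableEq ι]
    {K : Matrix ι ι ℝ} (hK : K.PosDef) : ∃ B : Matrix ι ι ℝ, B.IsSymm ∧ B * B = K := by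
  refine ⟨CFC.sqrt K, ?_, CFC.sqrt_mul_sqrt_self K hK.posSemidef.nonneg⟩
  simpa [IsSymm, IsHermitian, conjTranspose_eq_transpose_of_trivial] using
    (CFC.sqrt_nonneg K).posSemidef.isHermitian

theorem integral_gaussDensity_mul_exp_dotProduct {n : ℕ} {K : Matrix (Fin n) (Fin n) ℝ}
    (hK : K.PosDef) (μ c : Fin n → ℝ) :
    ∫ ω, gaussDensity μ K ω * exp (c ⬝ᵥ ω) = exp (c ⬝ᵥ μ + 1 / 2 * (c ⬝ᵥ K *ᵥ c)) := by
  obtain ⟨B, hBs, rfl⟩ := hK.exists_isSymm_mul_self_eq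
  have hB : B.det ≠ 0 := fun h => hK.det_pos.ne' (by rw [det_mul, h, zero_mul])
  set D := ((2 * π) • (B * B)).det ^ (-(1 : ℝ) / 2) with hD_def
  have hD : D * (|B.det| * √(2 * π) ^ n) = 1 := by
    have hdet : ((2 * π) • (B * B)).det = (√(2 * π) ^ n * |B.det|) ^ 2 := by
      rw [det_smul, Fintype.card_fin, det_mul, mul_pow (√(2 * π) ^ n), ← pow_mul, mul_comm n 2,
        pow_mul, sq_sqrt (by positivity), sq_abs, sq]
    rw [hD_def, hdet, neg_div, rpow_neg (by positivity), ← sqrt_eq_rpow,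
      sqrt_sq (by positivity), mul_comm (|B.det|)]
    exact inv_mul_cancel₀ (by positivity)
  have hshift : ∀ x, gaussDensity μ (B * B) (x + μ) * exp (c ⬝ᵥ (x + μ)) =
      D * exp (c ⬝ᵥ μ) * exp (-(1 / 2) * (x ⬝ᵥ (B * B)⁻¹ *ᵥ x) + c ⬝ᵥ x) := fun x => by
    rw [gaussDensity, add_sub_cancel_right, dotProduct_add, mul_assoc D, ← exp_add, mul_assoc,
      ← exp_add]
    ring_nf
  rw [← integral_add_right_eq_self _ μ]
  simp_rw [hshift]
  rw [integral_const_mul, integral_exp_neg_half_inv_mul_self_add hBs hB, Fintype.card_fin,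
    exp_add, one_div_mul_eq_div]
  linear_combination exp (c ⬝ᵥ μ) * exp (c ⬝ᵥ (B * B) *ᵥ c / 2) * hD

theorem seqMED_dual_objective_general (n : ℕ)
    (K : Matrix (Fin n) (Fin n) ℝ) (hK : K.PosDef)
    (y : Fin n → ℝ)
    (μ : Fin n → ℝ) (σ C : ℝ) (hσ : 0 < σ) (hC : 0 < C)
    (α : Fin n → ℝ) (hα : ∀ i, 0 ≤ α i ∧ α i < C) :
    -Real.log
        ((∫ ω : Fin n → ℝ,
            gaussDensity μ K ω * Real.exp (α ⬝ᵥ (Matrix.diagonal y) *ᵥ ω)) *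
          (∫ b : ℝ, (2 * π * σ ^ 2) ^ (-(1 : ℝ) / 2) *
            Real.exp (-b ^ 2 / (2 * σ ^ 2)) * Real.exp (b * (y ⬝ᵥ α))) *
          ∏ i : Fin n, ∫ γ in Set.Iic (1 : ℝ),
            C * Real.exp (-C * (1 - γ)) * Real.exp (-(α i) * γ)) =
      -(α ⬝ᵥ (Matrix.diagonal y) *ᵥ μ) -
        1 / 2 * (α ⬝ᵥ (Matrix.diagonal y * K * Matrix.diagonal y) *ᵥ α) -
        1 / 2 * σ ^ 2 * (y ⬝ᵥ α) ^ 2 +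
        ∑ i : Fin n, (α i + Real.log (1 - α i / C)) := by
  have hweights : ∀ v, α ⬝ᵥ diagonal y *ᵥ v = (α * y) ⬝ᵥ v := fun v => by
    rw [dotProduct_mulVec, show α ᵥ* diagonal y = α * y from funext (vecMul_diagonal α y)]
  have hdiag : diagonal y *ᵥ α = α * y :=
    funext fun i => (mulVec_diagonal y α i).trans (mul_comm _ _)
  have hquad : α ⬝ᵥ (diagonal y * K * diagonal y) *ᵥ α = (α * y) ⬝ᵥ K *ᵥ (α * y) := by
    rw [← mulVec_mulVec, ← mulVec_mulVec, hweights, hdiag]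
  have hslack : ∏ i, ∫ γ in Set.Iic (1 : ℝ), C * exp (-C * (1 - γ)) * exp (-α i * γ) =
      exp (-∑ i, (α i + log (1 - α i / C))) := by
    rw [← Finset.sum_neg_distrib, exp_sum]
    exact Finset.prod_congr rfl fun i _ => integral_slack_prior_mul_exp hC (hα i).2
  simp_rw [hweights]
  rw [integral_gaussDensity_mul_exp_dotProduct hK, integral_centered_gaussian_mul_exp hσ, hslack,
    ← exp_add, ← exp_add, log_exp, hquad]
  ring

/-- the negative log of the joint MED partition function
`Z(α) = Z_ω(α) Z_b(α) ∏ᵢ Z_{γᵢ}(α)` equals the dual objective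
`-αᵀYμ - αᵀYKYα/2 - σ²(yᵀα)²/2 + Σᵢ (αᵢ + log(1 - αᵢ/C))` of Corollary 3. -/
theorem seqMED_dual_objective (n : ℕ) (hn : 1 ≤ n)
    (K : Matrix (Fin n) (Fin n) ℝ) (hK : K.PosDef)
    (y : Fin n → ℝ) (hy : ∀ i, y i = 1 ∨ y i = -1)
    (μ : Fin n → ℝ) (σ C : ℝ) (hσ : 0 < σ) (hC : 0 < C)
    (α : Fin n → ℝ) (hα : ∀ i, 0 ≤ α i ∧ α i < C) :
    -Real.log
        ((∫ ω : Fin n → ℝ,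
            gaussDensity μ K ω * Real.exp (α ⬝ᵥ (Matrix.diagonal y) *ᵥ ω)) *
          (∫ b : ℝ, (2 * π * σ ^ 2) ^ (-(1 : ℝ) / 2) *
            Real.exp (-b ^ 2 / (2 * σ ^ 2)) * Real.exp (b * (y ⬝ᵥ α))) *
          ∏ i : Fin n, ∫ γ in Set.Iic (1 : ℝ),
            C * Real.exp (-C * (1 - γ)) * Real.exp (-(α i) * γ)) =
      -(α ⬝ᵥ (Matrix.diagonal y) *ᵥ μ) -
        1 / 2 * (α ⬝ᵥ (Matrix.diagonal y * K * Matrix.diagonal y) *ᵥ α) -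
        1 / 2 * σ ^ 2 * (y ⬝ᵥ α) ^ 2 +
        ∑ i : Fin n, (α i + Real.log (1 - α i / C)) :=
  seqMED_dual_objective_general n K hK y μ σ C hσ hC α hα
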